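/- If T is a tournament with at least two vertices, then the hull number of T in the P3 convexity equals 2: hn_{P3}(T) = 2. -/

import Mathlib

/-! Basic machinery for convexity on oriented graphs. -/

/-- A directed walk along the arc relation `A` from `u` to `v`,
recorded as the (nonempty) list of its vertices. Its length is `l.length - 1`. -/
def DiWalk {V : Type*} (A : V → V → Prop) (u v : V) (l : List V) : Prop :=
  l.head? = some u ∧ l.getLast? = some v ∧ l.Chain' A

/-- A shortest directed walk (geodesic) from `u` to `v`:
a directed walk of minimum length among all directed `(u,v)`-walks. -/
def IsGeodesic {V : Type*} (A : V → V → Prop) (u v : V) (l : List V) : Prop :=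
  DiWalk A u v l ∧ ∀ l', DiWalk A u v l' → l.length ≤ l'.length

/-- Geodetic interval: `u`, `v`, and all vertices lying on a shortest directed
`(u,v)`-path or on a shortest directed `(v,u)`-path. -/
def geoInterval {V : Type*} (A : V → V → Prop) (u v : V) : Set V :=
  {u, v} ∪ {w | (∃ l, IsGeodesic A u v l ∧ w ∈ l) ∨ (∃ l, IsGeodesic A v u l ∧ w ∈ l)}

/-- P3 interval: `u`, `v`, and all vertices lying on a directed `(u,v)`- or
`(v,u)`-path of length two. -/
def p3Interval {V : Type*} (A : V → V → Prop) (u v : V) : Set V :=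
  {u, v} ∪ {w | (A u w ∧ A w v) ∨ (A v w ∧ A w u)}

/-- P3* interval: `u`, `v`, and all vertices lying on a shortest directed `(u,v)`- or
`(v,u)`-path of length two (i.e. the corresponding endpoints are not adjacent). -/
def p3sInterval {V : Type*} (A : V → V → Prop) (u v : V) : Set V :=
  {u, v} ∪ {w | (A u w ∧ A w v ∧ ¬ A u v) ∨ (A v w ∧ A w u ∧ ¬ A v u)}

/-- A set is convex for the interval function `I` if it is closed under `I`. -/
def IsConvexSet {V : Type*} (I : V → V → Set V) (C : Set V) : Prop :=
  ∀ u ∈ C, ∀ v ∈ C, I u v ⊆ C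

/-- The convex hull of `S`: the smallest convex set containing `S`. -/
def convexHullD {V : Type*} (I : V → V → Set V) (S : Set V) : Set V :=
  ⋂₀ {C | IsConvexSet I C ∧ S ⊆ C}

/-- `S` is an interval set if applying `I` to pairs of `S` covers all vertices. -/
def IsIntervalSet {V : Type*} (I : V → V → Set V) (S : Set V) : Prop :=
  (⋃ u ∈ S, ⋃ v ∈ S, I u v) = Set.univ

/-- `S` is a hull set if its convex hull is the whole vertex set. -/
def IsHullSet {V : Type*} (I : V → V → Set V) (S : Set V) : Prop :=
  convexHullD I S = Set.univ

/-- The interval number: minimum cardinality of an interval set. -/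
noncomputable def intervalNumber {V : Type*} (I : V → V → Set V) : ℕ :=
  sInf {k | ∃ S : Set V, IsIntervalSet I S ∧ S.ncard = k}

/-- The hull number: minimum cardinality of a hull set. -/
noncomputable def hullNumber {V : Type*} (I : V → V → Set V) : ℕ :=
  sInf {k | ∃ S : Set V, IsHullSet I S ∧ S.ncard = k}

/-- `v` is reachable from `u` by a directed walk. -/
def Reach {V : Type*} (A : V → V → Prop) (u v : V) : Prop :=
  ∃ l, DiWalk A u v l

/-- An oriented graph: no loops and at most one arc between any two vertices. -/
def IsOriented {V : Type*} (A : V → V → Prop) : Prop :=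
  ∀ u v, A u v → ¬ A v u

/-- Strong connectivity. -/
def StronglyConnected {V : Type*} (A : V → V → Prop) : Prop :=
  ∀ u v, Reach A u v

/-- Connectivity of the underlying undirected graph. -/
def ConnectedD {V : Type*} (A : V → V → Prop) : Prop :=
  ∀ u v : V, Reach (fun a b => A a b ∨ A b a) u v

/-- A strong component: an equivalence class of mutual reachability. -/
def IsStrongComponent {V : Type*} (A : V → V → Prop) (C : Set V) : Prop :=
  ∃ v, C = {u | Reach A u v ∧ Reach A v u}

/-- A sink strong component: a strong component with no arc leaving it. -/
def IsSinkComponent {V : Type*} (A : V → V → Prop) (C : Set V) : Prop :=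
  IsStrongComponent A C ∧ ∀ u ∈ C, ∀ w, w ∉ C → ¬ A u w

/-- A source strong component: a strong component with no arc entering it. -/
def IsSourceComponent {V : Type*} (A : V → V → Prop) (C : Set V) : Prop :=
  IsStrongComponent A C ∧ ∀ u ∈ C, ∀ w, w ∉ C → ¬ A w u

/-- The out-section of `u`: all vertices reachable from `u`. -/
def outSection {V : Type*} (A : V → V → Prop) (u : V) : Set V :=
  {w | Reach A u w}

/-- The in-section of `u`: all vertices from which `u` is reachable. -/
def inSection {V : Type*} (A : V → V → Prop) (u : V) : Set V :=
  {w | Reach A w u}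

/-- A tournament: an oriented graph where every two distinct vertices are adjacent. -/
def IsTournament {V : Type*} (A : V → V → Prop) : Prop :=
  (∀ u v, A u v → ¬ A v u) ∧ ∀ u v : V, u ≠ v → A u v ∨ A v u

/-- The number of arcs of the digraph given by `A`. -/
noncomputable def arcCount {V : Type*} (A : V → V → Prop) : ℕ :=
  Nat.card {p : V × V // A p.1 p.2}

/-!
Any three vertices of a tournament contain a directed path `a → z → b`, and then `z` lies in
the P3 interval of `a` and `b`. So from a set of at least three vertices one vertex can be
removed without shrinking the hull, and removing vertices one at a time leaves a pair whose
hull is everything. Conversely, in an oriented graph the P3 interval of a vertex with itself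
is that vertex alone, so sets with at most one vertex are convex and cannot be hull sets.
-/

section Hull

variable {V : Type*} (I : V → V → Set V)

theorem isConvexSet_convexHullD (S : Set V) : IsConvexSet I (convexHullD I S) :=
  fun _ hu _ hv _ hw _ hC => hC.1 _ (hu _ hC) _ (hv _ hC) hw

theorem subset_convexHullD (S : Set V) : S ⊆ convexHullD I S :=
  fun _ hx _ hC => hC.2 hx

theorem convexHullD_subset {S C : Set V} (hC : IsConvexSet I C) (hSC : S ⊆ C) :
    convexHullD I S ⊆ C :=
  Set.sInter_subset_of_mem ⟨hC, hSC⟩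

theorem IsHullSet.eq_univ_of_isConvexSet {S : Set V} (hS : IsHullSet I S)
    (hconv : IsConvexSet I S) : S = Set.univ :=
  Set.eq_univ_of_univ_subset (hS ▸ convexHullD_subset I hconv subset_rfl)

end Hull

section P3

variable {V : Type*} {A : V → V → Prop}

theorem mem_p3Interval_of_arc_of_arc {a z b : V} (haz : A a z) (hzb : A z b) :
    z ∈ p3Interval A a b :=
  Or.inr (Or.inl ⟨haz, hzb⟩)

theorem IsOriented.p3Interval_self (hA : IsOriented A) (w : V) : p3Interval A w w = {w} := by
  ext t
  simp only [p3Interval, Set.mem_union, Set.mem_insert_iff, Set.mem_singleton_iff,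
    Set.mem_ofPred_eq, or_self]
  exact ⟨fun h => h.resolve_right fun ⟨hwt, htw⟩ => hA _ _ hwt htw, Or.inl⟩

theorem IsOriented.isConvexSet_of_subsingleton (hA : IsOriented A) {S : Set V}
    (hS : S.Subsingleton) : IsConvexSet (p3Interval A) S := by
  intro u hu v hv
  rw [hS hv hu, hA.p3Interval_self]
  exact Set.singleton_subset_iff.mpr hu

theorem IsOriented.two_le_ncard_of_isHullSet [Finite V] [Nontrivial V] (hA : IsOriented A)
    {S : Set V} (hS : IsHullSet (p3Interval A) S) : 2 ≤ S.ncard := by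
  by_contra! h
  have hsub : S.Subsingleton := Set.ncard_le_one_iff_subsingleton.mp (by omega)
  have huniv : S = Set.univ := hS.eq_univ_of_isConvexSet _ (hA.isConvexSet_of_subsingleton hsub)
  exact not_subsingleton V (Set.subsingleton_univ_iff.mp (huniv ▸ hsub))

theorem IsTournament.exists_arc_arc_of_arc (hT : IsTournament A) {s : Finset V} {x y w : V}
    (hx : x ∈ s) (hy : y ∈ s) (hw : w ∈ s) (hwx : w ≠ x) (hwy : w ≠ y) (hxy : A x y) :
    ∃ a ∈ s, ∃ z ∈ s, ∃ b ∈ s, A a z ∧ A z b := by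
  by_cases hyw : A y w
  · exact ⟨x, hx, y, hy, w, hw, hxy, hyw⟩
  by_cases hwx' : A w x
  · exact ⟨w, hw, x, hx, y, hy, hwx', hxy⟩
  exact ⟨x, hx, w, hw, y, hy, (hT.2 w x hwx).resolve_left hwx',
    (hT.2 y w hwy.symm).resolve_left hyw⟩

theorem IsTournament.exists_arc_arc_of_two_lt_card (hT : IsTournament A) {s : Finset V}
    (hs : 2 < s.card) : ∃ a ∈ s, ∃ z ∈ s, ∃ b ∈ s, A a z ∧ A z b := by
  obtain ⟨x, hx, y, hy, w, hw, hxy, hxw, hyw⟩ := Finset.two_lt_card.mp hs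
  rcases hT.2 x y hxy with h | h
  · exact hT.exists_arc_arc_of_arc hx hy hw hxw.symm hyw.symm h
  · exact hT.exists_arc_arc_of_arc hy hx hw hyw.symm hxw.symm h

theorem IsTournament.exists_pair_subset_convexHullD [DecidableEq V] (hT : IsTournament A)
    (s : Finset V) (hs : 2 ≤ s.card) :
    ∃ u ∈ s, ∃ v ∈ s, u ≠ v ∧ ↑s ⊆ convexHullD (p3Interval A) {u, v} := by
  induction s using Finset.strongInduction with
  | H s ih =>
    rcases hs.eq_or_lt with hs | hs
    · obtain ⟨u, v, huv, rfl⟩ := Finset.card_eq_two.mp hs.symm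
      exact ⟨u, by simp, v, by simp, huv, by simpa using subset_convexHullD _ _⟩
    obtain ⟨a, ha, z, hz, b, hb, haz, hzb⟩ := hT.exists_arc_arc_of_two_lt_card hs
    have hcard : 2 ≤ (s.erase z).card := by rw [Finset.card_erase_of_mem hz]; omega
    obtain ⟨u, hu, v, hv, huv, hsub⟩ := ih _ (Finset.erase_ssubset hz) hcard
    refine ⟨u, Finset.mem_of_mem_erase hu, v, Finset.mem_of_mem_erase hv, huv, fun t ht => ?_⟩
    by_cases htz : t = z
    · subst htz
      have hane : a ≠ t := by rintro rfl; exact hT.1 a a haz haz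
      have hbne : b ≠ t := by rintro rfl; exact hT.1 b b hzb hzb
      exact isConvexSet_convexHullD _ _ a (hsub (by simpa [hane] using ha))
        b (hsub (by simpa [hbne] using hb)) (mem_p3Interval_of_arc_of_arc haz hzb)
    · exact hsub (by simpa [htz] using ht)

end P3

/-- A tournament on at least two vertices has P3 hull number 2. -/
theorem stmt_11 {V : Type*} [Finite V] (A : V → V → Prop)
    (hT : IsTournament A) (h2 : 2 ≤ Nat.card V) :
    hullNumber (p3Interval A) = 2 := by
  classical
  have := Fintype.ofFinite V
  have : Nontrivial V := Finite.one_lt_card_iff_nontrivial.mp h2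
  obtain ⟨u, -, v, -, huv, hsub⟩ := hT.exists_pair_subset_convexHullD Finset.univ
    (by rwa [Finset.card_univ, ← Nat.card_eq_fintype_card])
  have hpair : IsHullSet (p3Interval A) {u, v} :=
    Set.eq_univ_of_univ_subset (by simpa using hsub)
  refine le_antisymm (Nat.sInf_le ⟨_, hpair, Set.ncard_pair huv⟩) ?_
  refine le_csInf ⟨_, _, hpair, rfl⟩ ?_
  rintro _ ⟨S, hS, rfl⟩
  exact IsOriented.two_le_ncard_of_isHullSet hT.1 hS
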